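/- arXiv:1311.7121 — 6 statements merged into one kernel-verified Lean document; each statement's English description precedes it below -/
import Mathlib

section
/- Let ν be a finite measure on a measurable space α and let τ : α → α be a measurable bijection with measurable inverse such that the pushforward measure τ_*ν and ν are mutually absolutely continuous. Then the set of points x with τ(x) = x and d(τ_*ν)/dν(x) ≠ 1 is ν-null; equivalently, for ν-almost every x, if τ(x) = x then the Radon–Nikodym derivative of τ_*ν with respect to ν equals 1 at x. -/
/-!
Write `f = d(τ_*ν)/dν`. The fixed points of `τ` need not form a measurable set, but a fixed point
with `f ≠ 1` lies in the largest `τ`-invariant subset of `{f < 1}` or of `{f > 1}`, and these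
cores are measurable, being intersections over all powers `τⁿ`, `n ∈ ℤ`. On an invariant set `D`,
`∫_D f dν = (τ_*ν) D = ν (τ⁻¹ D) = ν D = ∫_D 1 dν`, which is incompatible with `f < 1`
(or `f > 1`) on `D` unless `ν D = 0`.
-/

open MeasureTheory Set ENNReal

namespace Equiv.Perm

variable {α : Type*}

def invariantCore (σ : Perm α) (C : Set α) : Set α :=
  ⋂ n : ℤ, ⇑(σ ^ n) ⁻¹' C

theorem invariantCore_subset (σ : Perm α) (C : Set α) : σ.invariantCore C ⊆ C := fun _ hx => by
  simpa using mem_iInter.mp hx 0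

theorem preimage_invariantCore (σ : Perm α) (C : Set α) :
    σ ⁻¹' σ.invariantCore C = σ.invariantCore C := by
  ext x
  simp only [invariantCore, mem_preimage, mem_iInter, ← mul_apply, ← zpow_add_one]
  exact (Equiv.addRight (1 : ℤ)).forall_congr fun _ => Iff.rfl

theorem mem_invariantCore_of_apply_eq_self {σ : Perm α} {C : Set α} {x : α} (hfix : σ x = x)
    (hx : x ∈ C) : x ∈ σ.invariantCore C :=
  mem_iInter.mpr fun n => by simpa [zpow_apply_eq_self_of_apply_eq_self hfix n] using hx

end Equiv.Perm

namespace MeasurableEquiv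

variable {α : Type*} [MeasurableSpace α]

theorem measurable_toEquiv_zpow (τ : α ≃ᵐ α) (n : ℤ) : Measurable ⇑(τ.toEquiv ^ n) := by
  induction n using Int.induction_on with
  | zero => exact measurable_id
  | succ n ih => rw [zpow_add_one, Equiv.Perm.coe_mul]; exact ih.comp τ.measurable
  | pred n ih => rw [zpow_sub_one, Equiv.Perm.coe_mul]; exact ih.comp τ.symm.measurable

theorem measurableSet_invariantCore (τ : α ≃ᵐ α) {C : Set α} (hC : MeasurableSet C) :
    MeasurableSet (Equiv.Perm.invariantCore τ.toEquiv C) :=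
  .iInter fun n => τ.measurable_toEquiv_zpow n hC

end MeasurableEquiv

section

variable {α : Type*} [MeasurableSpace α]

theorem measure_eq_zero_of_setLIntegral_eq_of_lt {μ : Measure α} {f g : α → ℝ≥0∞} {s : Set α}
    (hs : MeasurableSet s) (hg : Measurable g) (hfi : ∫⁻ x in s, f x ∂μ ≠ ∞)
    (heq : ∫⁻ x in s, f x ∂μ = ∫⁻ x in s, g x ∂μ) (hlt : ∀ x ∈ s, f x < g x) : μ s = 0 := by
  by_contra hμs
  exact (setLIntegral_strict_mono hs hμs hg hfi (.of_forall hlt)).ne heq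

variable {ν : Measure α} [SigmaFinite ν] {τ : α → α} {D : Set α}

theorem setLIntegral_rnDeriv_map_of_preimage_eq (hτ : Measurable τ) (hac : ν.map τ ≪ ν)
    (hD : MeasurableSet D) (hinv : τ ⁻¹' D = D) :
    ∫⁻ x in D, (ν.map τ).rnDeriv ν x ∂ν = ν D := by
  rw [Measure.setLIntegral_rnDeriv hac, Measure.map_apply hτ hD, hinv]

theorem measure_eq_zero_of_rnDeriv_map_lt_one [IsFiniteMeasure ν] (hτ : Measurable τ)
    (hac : ν.map τ ≪ ν) (hD : MeasurableSet D) (hinv : τ ⁻¹' D = D)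
    (hlt : D ⊆ {x | (ν.map τ).rnDeriv ν x < 1}) : ν D = 0 := by
  have hint := setLIntegral_rnDeriv_map_of_preimage_eq hτ hac hD hinv
  refine measure_eq_zero_of_setLIntegral_eq_of_lt hD measurable_const ?_ ?_ hlt
  · rw [hint]; exact measure_ne_top ν D
  · simp [hint]

theorem measure_eq_zero_of_one_lt_rnDeriv_map [IsFiniteMeasure ν] (hτ : Measurable τ)
    (hac : ν.map τ ≪ ν) (hD : MeasurableSet D) (hinv : τ ⁻¹' D = D)
    (hgt : D ⊆ {x | 1 < (ν.map τ).rnDeriv ν x}) : ν D = 0 := by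
  have hint := setLIntegral_rnDeriv_map_of_preimage_eq hτ hac hD hinv
  refine measure_eq_zero_of_setLIntegral_eq_of_lt hD (Measure.measurable_rnDeriv _ _) ?_ ?_ hgt
  · simp
  · simp [hint]

end

theorem rnDeriv_eq_one_at_fixed_points_general
    {α : Type*} [MeasurableSpace α] (ν : Measure α) [IsFiniteMeasure ν]
    (τ : α ≃ᵐ α)
    (hac : ν.map τ ≪ ν) :
    ν {x | τ x = x ∧ (ν.map τ).rnDeriv ν x ≠ 1} = 0 := by
  set f := (ν.map τ).rnDeriv ν
  have hf : Measurable f := Measure.measurable_rnDeriv _ _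
  set Dlt := Equiv.Perm.invariantCore τ.toEquiv {x | f x < 1}
  set Dgt := Equiv.Perm.invariantCore τ.toEquiv {x | 1 < f x}
  have hDlt : ν Dlt = 0 :=
    measure_eq_zero_of_rnDeriv_map_lt_one τ.measurable hac
      (τ.measurableSet_invariantCore (measurableSet_lt hf measurable_const))
      (Equiv.Perm.preimage_invariantCore _ _) (Equiv.Perm.invariantCore_subset _ _)
  have hDgt : ν Dgt = 0 :=
    measure_eq_zero_of_one_lt_rnDeriv_map τ.measurable hac
      (τ.measurableSet_invariantCore (measurableSet_lt measurable_const hf))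
      (Equiv.Perm.preimage_invariantCore _ _) (Equiv.Perm.invariantCore_subset _ _)
  refine measure_mono_null (fun x ⟨hfix, hne⟩ => ?_) (measure_union_null hDlt hDgt)
  rcases hne.lt_or_gt with h | h
  · exact .inl (Equiv.Perm.mem_invariantCore_of_apply_eq_self hfix h)
  · exact .inr (Equiv.Perm.mem_invariantCore_of_apply_eq_self hfix h)

/-- Let `ν` be a finite measure and `τ` a measurable bijection with measurable inverse
(a measurable equivalence) such that `τ_*ν` and `ν` are mutually absolutely continuous.
Then the set of fixed points of `τ` at which the Radon–Nikodym derivative `d(τ_*ν)/dν`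
differs from `1` is `ν`-null; equivalently, for `ν`-almost every `x`, if `τ x = x` then
`d(τ_*ν)/dν (x) = 1`. -/
theorem rnDeriv_eq_one_at_fixed_points
    {α : Type*} [MeasurableSpace α] (ν : Measure α) [IsFiniteMeasure ν]
    (τ : α ≃ᵐ α)
    (hac : ν.map τ ≪ ν) (hac' : ν ≪ ν.map τ) :
    ν {x | τ x = x ∧ (ν.map τ).rnDeriv ν x ≠ 1} = 0 :=
  rnDeriv_eq_one_at_fixed_points_general ν τ hac
end

section
/- Let (α, 𝒜) be a measurable space, 𝒯 a countable family of partial Borel automorphisms of α that is closed under inversion and under composition (restricted to the set where the composition is defined), and ν a finite measure on α quasi-invariant under 𝒯. Then there exists a measurable set X₀ ⊆ α with ν(α \ X₀) = 0, saturated under 𝒯, such that for every x ∈ X₀ and every τ : S → S' in 𝒯 with x ∈ S and τ(x) = x, one has d[τ_*ν]/dν(x) = 1. -/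
open MeasureTheory Set

/-- A partial Borel automorphism of a measurable space `α`: a bijection
`τ : source → target` between measurable subsets of `α`, measurable with
measurable inverse. -/
structure PartialBorelAut (α : Type*) [MeasurableSpace α] where
  source : Set α
  target : Set α
  toFun : α → α
  invFun : α → α
  source_measurable : MeasurableSet source
  target_measurable : MeasurableSet target
  mapsTo : MapsTo toFun source target
  inv_mapsTo : MapsTo invFun target source
  left_inv : ∀ x ∈ source, invFun (toFun x) = x
  right_inv : ∀ y ∈ target, toFun (invFun y) = y
  measurable_image : ∀ A : Set α, MeasurableSet A → A ⊆ source → MeasurableSet (toFun '' A)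
  measurable_image_inv : ∀ A : Set α, MeasurableSet A → A ⊆ target → MeasurableSet (invFun '' A)

namespace PartialBorelAut

variable {α : Type*} [MeasurableSpace α]

theorem injOn_invFun (τ : PartialBorelAut α) : InjOn τ.invFun τ.target := by
  intro a ha b hb h
  have h' := congrArg τ.toFun h
  rwa [τ.right_inv a ha, τ.right_inv b hb] at h'

/-- The pushforward `τ_*ν` under a partial Borel automorphism `τ` of (the restriction to
the source of) a measure `ν`: it is the measure `A ↦ ν (τ⁻¹ (A ∩ target))`, carried by
the target of `τ`. -/
noncomputable def pushforward (τ : PartialBorelAut α) (ν : Measure α) : Measure α :=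
  Measure.ofMeasurable (fun A _ => ν (τ.invFun '' (A ∩ τ.target)))
    (by simp)
    (by
      intro f hf hdisj
      have himg : ∀ i, MeasurableSet (τ.invFun '' (f i ∩ τ.target)) := fun i =>
        τ.measurable_image_inv _ ((hf i).inter τ.target_measurable) inter_subset_right
      have hdisj' : Pairwise (Function.onFun Disjoint fun i => τ.invFun '' (f i ∩ τ.target)) := by
        intro i j hij
        refine Set.disjoint_left.2 ?_
        rintro z ⟨a, ⟨haf, hat⟩, rfl⟩ ⟨b, ⟨hbf, hbt⟩, hba⟩
        have hab : b = a := τ.injOn_invFun hbt hat hba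
        exact Set.disjoint_left.1 (hdisj hij) haf (hab ▸ hbf)
      calc ν (τ.invFun '' ((⋃ i, f i) ∩ τ.target))
          = ν (⋃ i, τ.invFun '' (f i ∩ τ.target)) := by rw [iUnion_inter, image_iUnion]
        _ = ∑' i, ν (τ.invFun '' (f i ∩ τ.target)) := measure_iUnion hdisj' himg)

/-- The inverse of a partial Borel automorphism. -/
def symm (τ : PartialBorelAut α) : PartialBorelAut α where
  source := τ.target
  target := τ.source
  toFun := τ.invFun
  invFun := τ.toFun
  source_measurable := τ.target_measurable
  target_measurable := τ.source_measurable
  mapsTo := τ.inv_mapsTo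
  inv_mapsTo := τ.mapsTo
  left_inv := τ.right_inv
  right_inv := τ.left_inv
  measurable_image := τ.measurable_image_inv
  measurable_image_inv := τ.measurable_image

end PartialBorelAut

/-- Quasi-invariance of a measure under a family of partial Borel automorphisms. -/
def QuasiInvariant {α : Type*} [MeasurableSpace α]
    (𝒯 : Set (PartialBorelAut α)) (ν : Measure α) : Prop :=
  ∀ τ ∈ 𝒯, ∀ A : Set α, MeasurableSet A → A ⊆ τ.source → (ν A = 0 ↔ ν (τ.toFun '' A) = 0)

/-- Saturation of a set under a family of partial Borel automorphisms. -/
def Saturated {α : Type*} [MeasurableSpace α]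
    (𝒯 : Set (PartialBorelAut α)) (Y : Set α) : Prop :=
  ∀ τ ∈ 𝒯, τ.toFun '' (Y ∩ τ.source) ⊆ Y ∧ τ.invFun '' (Y ∩ τ.target) ⊆ Y

/-- The family `𝒯` is closed under inversion. -/
def ClosedUnderInv {α : Type*} [MeasurableSpace α] (𝒯 : Set (PartialBorelAut α)) : Prop :=
  ∀ τ ∈ 𝒯, τ.symm ∈ 𝒯

/-- The family `𝒯` is closed under composition, restricted to the set where the
composition is defined. -/
def ClosedUnderComp {α : Type*} [MeasurableSpace α] (𝒯 : Set (PartialBorelAut α)) : Prop :=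
  ∀ τ₁ ∈ 𝒯, ∀ τ₂ ∈ 𝒯, ∃ σ ∈ 𝒯,
    σ.source = {x ∈ τ₁.source | τ₁.toFun x ∈ τ₂.source} ∧
    ∀ x ∈ σ.source, σ.toFun x = τ₂.toFun (τ₁.toFun x)

/-!
Fix `τ ∈ 𝒯` and let `A = H ∩ τ(H)`, where `H ⊆ source` is a measurable hull of the fixed-point
set `Fix τ`. For measurable `B`, both `B ∩ A` and `τ⁻¹(B ∩ A)` contain `Fix τ ∩ B` and lie in
`H ∩ B`, resp. `H ∩ τ⁻¹B`, and `Fix τ` meets `B` and `τ⁻¹B` in the same set; so both have measure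
`ν*(Fix τ ∩ B)`. Hence `τ_*ν` and `ν` agree on `A`, and `d[τ_*ν]/dν = 1` almost everywhere on
`A ⊇ Fix τ`. Over the countably many `τ ∈ 𝒯` the bad fixed points form a null set; by
quasi-invariance its images under `𝒯` are null too, and closure under composition and inversion
makes one round of images saturated. `X₀` is its complement.
-/

namespace MeasureTheory.Measure

variable {α : Type*} [MeasurableSpace α]

theorem ae_rnDeriv_eq_one_of_restrict_eq {μ ν : Measure α} [HaveLebesgueDecomposition μ ν]
    [SigmaFinite ν] {A : Set α} (hA : MeasurableSet A) (h : μ.restrict A = ν.restrict A) :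
    ∀ᵐ x ∂ν, x ∈ A → μ.rnDeriv ν x = 1 := by
  have hμ := rnDeriv_restrict μ ν hA
  rw [h] at hμ
  filter_upwards [hμ, rnDeriv_restrict_self ν hA] with x hμx hνx hx
  simpa [indicator_of_mem hx] using hμx.symm.trans hνx

theorem measure_eq_of_inter_subset_of_subset_toMeasurable_inter (ν : Measure α) [SFinite ν]
    {C S T : Set α} (hT : MeasurableSet T) (hCS : C ∩ T ⊆ S) (hST : S ⊆ toMeasurable ν C ∩ T) :
    ν S = ν (C ∩ T) :=
  le_antisymm ((measure_mono hST).trans (measure_toMeasurable_inter_of_sFinite hT C).le)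
    (measure_mono hCS)

end MeasureTheory.Measure

namespace PartialBorelAut

open Measure

variable {α : Type*} [MeasurableSpace α]

def fixedPoints (τ : PartialBorelAut α) : Set α := {x ∈ τ.source | τ.toFun x = x}

theorem invFun_of_mem_fixedPoints {τ : PartialBorelAut α} {x : α} (hx : x ∈ τ.fixedPoints) :
    τ.invFun x = x := by
  conv_lhs => rw [← hx.2]
  exact τ.left_inv x hx.1

theorem mem_target_of_mem_fixedPoints {τ : PartialBorelAut α} {x : α} (hx : x ∈ τ.fixedPoints) :
    x ∈ τ.target :=
  hx.2 ▸ τ.mapsTo hx.1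

theorem fixedPoints_inter_image_invFun (τ : PartialBorelAut α) (B : Set α) :
    τ.fixedPoints ∩ τ.invFun '' (B ∩ τ.target) = τ.fixedPoints ∩ B := by
  ext x
  refine ⟨?_, fun ⟨hx, hxB⟩ => ⟨hx, x, ⟨hxB, mem_target_of_mem_fixedPoints hx⟩,
    invFun_of_mem_fixedPoints hx⟩⟩
  rintro ⟨hx, y, ⟨hyB, hyt⟩, rfl⟩
  refine ⟨hx, ?_⟩
  rwa [← hx.2, τ.right_inv y hyt]

theorem pushforward_apply (τ : PartialBorelAut α) (ν : Measure α) {A : Set α}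
    (hA : MeasurableSet A) :
    τ.pushforward ν A = ν (τ.invFun '' (A ∩ τ.target)) :=
  ofMeasurable_apply A hA

instance (τ : PartialBorelAut α) (ν : Measure α) [IsFiniteMeasure ν] :
    IsFiniteMeasure (τ.pushforward ν) where
  measure_univ_lt_top := by
    rw [pushforward_apply τ ν MeasurableSet.univ]
    exact measure_lt_top ν _

theorem exists_measurable_fixedPoints_subset_restrict_pushforward_eq (τ : PartialBorelAut α)
    (ν : Measure α) [SFinite ν] :
    ∃ A, MeasurableSet A ∧ τ.fixedPoints ⊆ A ∧ (τ.pushforward ν).restrict A = ν.restrict A := by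
  set C := τ.fixedPoints
  set H := toMeasurable ν C ∩ τ.source
  have hH : MeasurableSet H := (measurableSet_toMeasurable ν C).inter τ.source_measurable
  have hHs : H ⊆ τ.source := inter_subset_right
  set A := H ∩ τ.toFun '' H
  have hCA : C ⊆ A := fun x hx =>
    have hxH : x ∈ H := ⟨subset_toMeasurable ν C hx, hx.1⟩
    ⟨hxH, x, hxH, hx.2⟩
  have hA : MeasurableSet A := hH.inter (τ.measurable_image H hH hHs)
  refine ⟨A, hA, hCA, ext fun B hB => ?_⟩
  have hBA : ν (B ∩ A) = ν (C ∩ B) := by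
    refine measure_eq_of_inter_subset_of_subset_toMeasurable_inter ν hB ?_ ?_
    · exact fun x hx => ⟨hx.2, hCA hx.1⟩
    · exact fun x hx => ⟨hx.2.1.1, hx.1⟩
  have hT : MeasurableSet (τ.invFun '' (B ∩ τ.target)) :=
    τ.measurable_image_inv _ (hB.inter τ.target_measurable) inter_subset_right
  have hpush : ν (τ.invFun '' (B ∩ A ∩ τ.target)) = ν (C ∩ B) := by
    rw [← fixedPoints_inter_image_invFun]
    refine measure_eq_of_inter_subset_of_subset_toMeasurable_inter ν hT ?_ ?_
    · rw [fixedPoints_inter_image_invFun]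
      exact fun x hx => ⟨x, ⟨⟨hx.2, hCA hx.1⟩, mem_target_of_mem_fixedPoints hx.1⟩,
        invFun_of_mem_fixedPoints hx.1⟩
    · rintro _ ⟨y, ⟨⟨hyB, -, x, hxH, rfl⟩, hyt⟩, rfl⟩
      rw [τ.left_inv x (hHs hxH)]
      exact ⟨hxH.1, τ.toFun x, ⟨hyB, hyt⟩, τ.left_inv x (hHs hxH)⟩
  rw [restrict_apply hB, restrict_apply hB, pushforward_apply τ ν (hB.inter hA), hpush, hBA]

theorem measure_rnDeriv_pushforward_ne_one_fixedPoints (τ : PartialBorelAut α) (ν : Measure α)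
    [IsFiniteMeasure ν] :
    ν {x ∈ τ.fixedPoints | (τ.pushforward ν).rnDeriv ν x ≠ 1} = 0 := by
  obtain ⟨A, hA, hCA, hrestrict⟩ :=
    τ.exists_measurable_fixedPoints_subset_restrict_pushforward_eq ν
  refine measure_mono_null ?_ (ae_iff.mp (ae_rnDeriv_eq_one_of_restrict_eq hA hrestrict))
  exact fun x hx h => hx.2 (h (hCA hx.1))

end PartialBorelAut

section Saturation

variable {α : Type*} [MeasurableSpace α] {𝒯 : Set (PartialBorelAut α)}

theorem Saturated.compl {Y : Set α} (hY : Saturated 𝒯 Y) : Saturated 𝒯 Yᶜ := by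
  refine fun σ hσ => ⟨?_, ?_⟩
  · rintro _ ⟨x, ⟨hxY, hxs⟩, rfl⟩ hσx
    exact hxY (σ.left_inv x hxs ▸ (hY σ hσ).2 ⟨σ.toFun x, ⟨hσx, σ.mapsTo hxs⟩, rfl⟩)
  · rintro _ ⟨y, ⟨hyY, hyt⟩, rfl⟩ hσy
    exact hyY (σ.right_inv y hyt ▸ (hY σ hσ).1 ⟨σ.invFun y, ⟨hσy, σ.inv_mapsTo hyt⟩, rfl⟩)

theorem saturated_of_image_subset (hinv : ClosedUnderInv 𝒯) {Y : Set α}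
    (hY : ∀ σ ∈ 𝒯, σ.toFun '' (Y ∩ σ.source) ⊆ Y) : Saturated 𝒯 Y :=
  fun σ hσ => ⟨hY σ hσ, hY σ.symm (hinv σ hσ)⟩

theorem exists_measurable_saturated_superset_of_measure_eq_zero {ν : Measure α}
    (hcount : 𝒯.Countable) (hinv : ClosedUnderInv 𝒯) (hcomp : ClosedUnderComp 𝒯)
    (hqi : QuasiInvariant 𝒯 ν) {M : Set α} (hM : ν M = 0) :
    ∃ M', MeasurableSet M' ∧ ν M' = 0 ∧ M ⊆ M' ∧ Saturated 𝒯 M' := by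
  set M₀ := toMeasurable ν M
  have hM₀ : MeasurableSet M₀ := measurableSet_toMeasurable ν M
  have hsrc : ∀ τ : PartialBorelAut α, MeasurableSet (M₀ ∩ τ.source) :=
    fun τ => hM₀.inter τ.source_measurable
  refine ⟨M₀ ∪ ⋃ τ ∈ 𝒯, τ.toFun '' (M₀ ∩ τ.source), ?_, ?_,
    (subset_toMeasurable ν M).trans subset_union_left, saturated_of_image_subset hinv ?_⟩
  · exact hM₀.union (.biUnion hcount fun τ _ =>
      τ.measurable_image _ (hsrc τ) inter_subset_right)
  · refine measure_union_null (by rwa [measure_toMeasurable])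
      ((measure_biUnion_null_iff hcount).2 fun τ hτ => ?_)
    exact (hqi τ hτ _ (hsrc τ) inter_subset_right).mp
      (measure_mono_null inter_subset_left (by rwa [measure_toMeasurable]))
  · rintro σ hσ _ ⟨x, ⟨hx | hx, hxs⟩, rfl⟩
    · exact Or.inr (mem_biUnion hσ ⟨x, ⟨hx, hxs⟩, rfl⟩)
    · obtain ⟨τ, hτ, w, ⟨hw, hws⟩, rfl⟩ := mem_iUnion₂.mp hx
      obtain ⟨ρ, hρ, hρs, hρ_apply⟩ := hcomp τ hτ σ hσ
      have hwρ : w ∈ ρ.source := hρs ▸ ⟨hws, hxs⟩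
      exact Or.inr (mem_biUnion hρ ⟨w, ⟨hw, hwρ⟩, hρ_apply w hwρ⟩)

end Saturation

/-- **Ghys' lemma.** For a finite measure `ν` quasi-invariant under a countable family `𝒯`
of partial Borel automorphisms closed under inversion and composition, there is a
measurable saturated set `X₀` of full measure such that every `τ ∈ 𝒯` fixing a point
`x ∈ X₀` of its source has Radon–Nikodym derivative `d[τ_*ν]/dν (x) = 1` there. -/
theorem ghys_lemma
    {α : Type*} [MeasurableSpace α] (ν : Measure α) [IsFiniteMeasure ν]
    (𝒯 : Set (PartialBorelAut α)) (hcount : 𝒯.Countable)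
    (hinv : ClosedUnderInv 𝒯) (hcomp : ClosedUnderComp 𝒯)
    (hqi : QuasiInvariant 𝒯 ν) :
    ∃ X₀ : Set α, MeasurableSet X₀ ∧ ν X₀ᶜ = 0 ∧ Saturated 𝒯 X₀ ∧
      ∀ x ∈ X₀, ∀ τ ∈ 𝒯, x ∈ τ.source → τ.toFun x = x →
        (τ.pushforward ν).rnDeriv ν x = 1 := by
  set M := ⋃ τ ∈ 𝒯, {x ∈ τ.fixedPoints | (τ.pushforward ν).rnDeriv ν x ≠ 1}
  have hM : ν M = 0 := (measure_biUnion_null_iff hcount).2 fun τ _ =>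
    τ.measure_rnDeriv_pushforward_ne_one_fixedPoints ν
  obtain ⟨M', hM'm, hM'0, hMM', hM'sat⟩ :=
    exists_measurable_saturated_superset_of_measure_eq_zero hcount hinv hcomp hqi hM
  refine ⟨M'ᶜ, hM'm.compl, by rwa [compl_compl], hM'sat.compl, ?_⟩
  intro x hx τ hτ hxs hfix
  by_contra hne
  exact hx (hMM' (mem_biUnion hτ ⟨⟨hxs, hfix⟩, hne⟩))
end

section
/- Let (α, 𝒜) be a measurable space, 𝒯 a countable family of partial Borel automorphisms of α that is closed under inversion and under composition (restricted to the set where the composition is defined), and ν a finite measure on α quasi-invariant under 𝒯. Then there exists a measurable set X₀ ⊆ α with ν(α \ X₀) = 0, saturated under 𝒯, such that for every x ∈ X₀ and all τ₁ : S₁ → S₁', τ₂ : S₂ → S₂' in 𝒯 with x ∈ S₁ ∩ S₂ and τ₁(x) = τ₂(x), one has d[(τ₁⁻¹)_*ν]/dν(x) = d[(τ₂⁻¹)_*ν]/dν(x), where τᵢ⁻¹ : Sᵢ' → Sᵢ denotes the inverse partial Borel automorphism. -/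
open MeasureTheory Set

/-!
The Radon–Nikodym derivatives `f₁, f₂` of `τ₁⁻¹_*ν` and `τ₂⁻¹_*ν` are compared on the set where
`τ₁ x = τ₂ x` and `f₂ x < f₁ x`. This set need not be measurable, but it is fixed pointwise by
`φ = τ₂⁻¹ ∘ τ₁`, so it lies in a measurable set `K` on which `f₂ < f₁` and which `φ` maps into
itself. Then `τ₁ K ⊆ τ₂ K`, hence `∫_K f₁ dν ≤ ν (τ₁ K) ≤ ν (τ₂ K) = ∫_K f₂ dν`, which forces
`ν K = 0`. Countably many pairs give a null bad set, and adding its images under `𝒯` makes it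
saturated while keeping it null.
-/

open scoped ENNReal

section ForwardInvariant

variable {α : Type*}

/-- The points `x` with `x, φ x, …, φ^[n] x` all in `G`. -/
def iterateStaysIn (φ : α → α) (G : Set α) : ℕ → Set α
  | 0 => G
  | n + 1 => G ∩ φ ⁻¹' iterateStaysIn φ G n

lemma subset_iterateStaysIn {φ : α → α} {F G : Set α} (hFG : F ⊆ G) (hF : MapsTo φ F F)
    (n : ℕ) : F ⊆ iterateStaysIn φ G n := by
  induction n with
  | zero => exact hFG
  | succ n ih => exact fun x hx => ⟨hFG hx, ih (hF hx)⟩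

variable [MeasurableSpace α]

lemma measurableSet_iterateStaysIn {φ : α → α} {G : Set α} (hG : MeasurableSet G)
    (hφ : ∀ B, MeasurableSet B → MeasurableSet (G ∩ φ ⁻¹' B)) (n : ℕ) :
    MeasurableSet (iterateStaysIn φ G n) := by
  induction n with
  | zero => exact hG
  | succ n ih => exact hφ _ ih

theorem exists_measurableSet_mapsTo_of_mapsTo {φ : α → α} {F G : Set α} (hG : MeasurableSet G)
    (hφ : ∀ B, MeasurableSet B → MeasurableSet (G ∩ φ ⁻¹' B)) (hFG : F ⊆ G)
    (hF : MapsTo φ F F) :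
    ∃ K, MeasurableSet K ∧ F ⊆ K ∧ K ⊆ G ∧ MapsTo φ K K :=
  ⟨⋂ n, iterateStaysIn φ G n, .iInter (measurableSet_iterateStaysIn hG hφ),
    subset_iInter (subset_iterateStaysIn hFG hF), iInter_subset _ 0,
    fun _ hx => mem_iInter.2 fun n => (mem_iInter.1 hx (n + 1)).2⟩

end ForwardInvariant

namespace MeasureTheory.Measure

variable {α : Type*} [MeasurableSpace α]

theorem measure_eq_zero_of_rnDeriv_lt {μ₁ μ₂ ν : Measure α} [HaveLebesgueDecomposition μ₂ ν]
    (hμ₂ : μ₂ ≪ ν) {K : Set α} (hK : MeasurableSet K) (hK_ne_top : μ₂ K ≠ ∞)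
    (hle : μ₁ K ≤ μ₂ K) (hlt : ∀ x ∈ K, μ₂.rnDeriv ν x < μ₁.rnDeriv ν x) : ν K = 0 := by
  by_contra hK0
  have hint₂ : ∫⁻ x in K, μ₂.rnDeriv ν x ∂ν = μ₂ K := setLIntegral_rnDeriv' hμ₂ hK
  have hstrict := setLIntegral_strict_mono hK hK0 (measurable_rnDeriv μ₁ ν)
    (hint₂ ▸ hK_ne_top) (ae_of_all _ hlt)
  exact (hstrict.trans_le ((setLIntegral_rnDeriv_le K).trans (hle.trans hint₂.ge))).false

end MeasureTheory.Measure

namespace PartialBorelAut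

variable {α : Type*} [MeasurableSpace α]

lemma measurableSet_source_inter_preimage (τ : PartialBorelAut α) {B : Set α}
    (hB : MeasurableSet B) : MeasurableSet (τ.source ∩ τ.toFun ⁻¹' B) := by
  have h : τ.source ∩ τ.toFun ⁻¹' B = τ.invFun '' (B ∩ τ.target) := by
    ext x
    constructor
    · rintro ⟨hx, hxB⟩
      exact ⟨τ.toFun x, ⟨hxB, τ.mapsTo hx⟩, τ.left_inv x hx⟩
    · rintro ⟨y, ⟨hyB, hy⟩, rfl⟩
      exact ⟨τ.inv_mapsTo hy, by rwa [mem_preimage, τ.right_inv y hy]⟩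
  rw [h]
  exact τ.measurable_image_inv _ (hB.inter τ.target_measurable) inter_subset_right

lemma symm_pushforward_apply (τ : PartialBorelAut α) (ν : Measure α) {A : Set α}
    (hA : MeasurableSet A) : τ.symm.pushforward ν A = ν (τ.toFun '' (A ∩ τ.source)) :=
  Measure.ofMeasurable_apply A hA

instance isFiniteMeasure_pushforward (τ : PartialBorelAut α) (ν : Measure α)
    [IsFiniteMeasure ν] : IsFiniteMeasure (τ.pushforward ν) :=
  ⟨by rw [pushforward, Measure.ofMeasurable_apply _ .univ]; exact measure_lt_top ν _⟩

lemma symm_pushforward_absolutelyContinuous (τ : PartialBorelAut α) {ν : Measure α}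
    (h : ∀ A, MeasurableSet A → A ⊆ τ.source → ν A = 0 → ν (τ.toFun '' A) = 0) :
    τ.symm.pushforward ν ≪ ν :=
  .mk fun A hA hνA => by
    rw [τ.symm_pushforward_apply ν hA]
    exact h _ (hA.inter τ.source_measurable) inter_subset_right
      (measure_mono_null inter_subset_left hνA)

lemma symm_pushforward_mono_of_image_subset {τ₁ τ₂ : PartialBorelAut α} (ν : Measure α)
    {K : Set α} (hK : MeasurableSet K)
    (h : τ₁.toFun '' (K ∩ τ₁.source) ⊆ τ₂.toFun '' (K ∩ τ₂.source)) :
    τ₁.symm.pushforward ν K ≤ τ₂.symm.pushforward ν K := by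
  rw [τ₁.symm_pushforward_apply ν hK, τ₂.symm_pushforward_apply ν hK]
  exact measure_mono h

variable (ν : Measure α) [IsFiniteMeasure ν] (τ₁ τ₂ : PartialBorelAut α)

theorem measure_coincidence_rnDeriv_lt_eq_zero (h₂ : τ₂.symm.pushforward ν ≪ ν) :
    ν {x | x ∈ τ₁.source ∧ x ∈ τ₂.source ∧ τ₁.toFun x = τ₂.toFun x ∧
      (τ₂.symm.pushforward ν).rnDeriv ν x < (τ₁.symm.pushforward ν).rnDeriv ν x} = 0 := by
  set f₁ := (τ₁.symm.pushforward ν).rnDeriv ν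
  set f₂ := (τ₂.symm.pushforward ν).rnDeriv ν
  set F := {x | x ∈ τ₁.source ∧ x ∈ τ₂.source ∧ τ₁.toFun x = τ₂.toFun x ∧ f₂ x < f₁ x}
  set φ := τ₂.invFun ∘ τ₁.toFun
  set G := τ₁.source ∩ τ₁.toFun ⁻¹' τ₂.target ∩ {x | f₂ x < f₁ x}
  have hlt : MeasurableSet {x | f₂ x < f₁ x} :=
    measurableSet_lt (Measure.measurable_rnDeriv _ _) (Measure.measurable_rnDeriv _ _)
  have hG : MeasurableSet G :=
    (τ₁.measurableSet_source_inter_preimage τ₂.target_measurable).inter hlt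
  have hφ : ∀ B, MeasurableSet B → MeasurableSet (G ∩ φ ⁻¹' B) := by
    intro B hB
    have h : G ∩ φ ⁻¹' B =
        τ₁.source ∩ τ₁.toFun ⁻¹' (τ₂.target ∩ τ₂.invFun ⁻¹' B) ∩ {x | f₂ x < f₁ x} := by
      ext x
      simp only [G, φ, mem_inter_iff, mem_preimage, mem_ofPred_eq, Function.comp_apply]
      tauto
    rw [h]
    exact (τ₁.measurableSet_source_inter_preimage
      (τ₂.symm.measurableSet_source_inter_preimage hB)).inter hlt
  have hFG : F ⊆ G := by
    rintro x ⟨hx₁, hx₂, heq, hx⟩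
    refine ⟨⟨hx₁, ?_⟩, hx⟩
    rw [mem_preimage, heq]
    exact τ₂.mapsTo hx₂
  have hFφ : MapsTo φ F F := by
    intro x hx
    have hφx : φ x = x := by
      simp only [φ, Function.comp_apply, hx.2.2.1, τ₂.left_inv x hx.2.1]
    rwa [hφx]
  obtain ⟨K, hK, hFK, hKG, hKφ⟩ := exists_measurableSet_mapsTo_of_mapsTo hG hφ hFG hFφ
  -- `τ₁ x = τ₂ (φ x)` with `φ x ∈ K`
  have himage : τ₁.toFun '' (K ∩ τ₁.source) ⊆ τ₂.toFun '' (K ∩ τ₂.source) := by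
    rintro _ ⟨x, ⟨hxK, -⟩, rfl⟩
    have hx : τ₁.toFun x ∈ τ₂.target := (hKG hxK).1.2
    exact ⟨φ x, ⟨hKφ hxK, τ₂.inv_mapsTo hx⟩, τ₂.right_inv _ hx⟩
  exact measure_mono_null hFK <| Measure.measure_eq_zero_of_rnDeriv_lt h₂ hK
    (measure_ne_top _ _) (symm_pushforward_mono_of_image_subset ν hK himage)
    fun x hx => (hKG hx).2

theorem measure_coincidence_rnDeriv_ne_eq_zero (h₁ : τ₁.symm.pushforward ν ≪ ν)
    (h₂ : τ₂.symm.pushforward ν ≪ ν) :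
    ν {x | x ∈ τ₁.source ∧ x ∈ τ₂.source ∧ τ₁.toFun x = τ₂.toFun x ∧
      (τ₁.symm.pushforward ν).rnDeriv ν x ≠ (τ₂.symm.pushforward ν).rnDeriv ν x} = 0 := by
  refine measure_mono_null ?_ (measure_union_null
    (measure_coincidence_rnDeriv_lt_eq_zero ν τ₁ τ₂ h₂)
    (measure_coincidence_rnDeriv_lt_eq_zero ν τ₂ τ₁ h₁))
  rintro x ⟨hx₁, hx₂, heq, hne⟩
  rcases hne.lt_or_gt with hlt | hlt
  · exact Or.inr ⟨hx₂, hx₁, heq.symm, hlt⟩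
  · exact Or.inl ⟨hx₁, hx₂, heq, hlt⟩

end PartialBorelAut

section Saturation

variable {α : Type*} [MeasurableSpace α] {𝒯 : Set (PartialBorelAut α)}

def saturation (𝒯 : Set (PartialBorelAut α)) (N : Set α) : Set α :=
  N ∪ ⋃ τ ∈ 𝒯, τ.toFun '' (N ∩ τ.source)

lemma measurableSet_saturation (hcount : 𝒯.Countable) {N : Set α} (hN : MeasurableSet N) :
    MeasurableSet (saturation 𝒯 N) :=
  hN.union <| .biUnion hcount fun τ _ =>
    τ.measurable_image _ (hN.inter τ.source_measurable) inter_subset_right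

lemma measure_saturation_eq_zero {ν : Measure α} (hcount : 𝒯.Countable)
    (hqi : QuasiInvariant 𝒯 ν) {N : Set α} (hN : MeasurableSet N) (hN0 : ν N = 0) :
    ν (saturation 𝒯 N) = 0 :=
  measure_union_null hN0 <| (measure_biUnion_null_iff hcount).2 fun τ hτ =>
    (hqi τ hτ _ (hN.inter τ.source_measurable) inter_subset_right).1
      (measure_mono_null inter_subset_left hN0)

lemma saturated_of_forall_image_subset (hinv : ClosedUnderInv 𝒯) {Y : Set α}
    (h : ∀ τ ∈ 𝒯, τ.toFun '' (Y ∩ τ.source) ⊆ Y) : Saturated 𝒯 Y :=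
  fun τ hτ => ⟨h τ hτ, h τ.symm (hinv τ hτ)⟩

lemma saturated_compl_saturation (hinv : ClosedUnderInv 𝒯) (hcomp : ClosedUnderComp 𝒯)
    (N : Set α) : Saturated 𝒯 (saturation 𝒯 N)ᶜ := by
  refine saturated_of_forall_image_subset hinv fun τ hτ => ?_
  rintro _ ⟨x, ⟨hx, hxτ⟩, rfl⟩ (hN | hsat)
  · exact hx (.inr (mem_biUnion (hinv τ hτ) ⟨τ.toFun x, ⟨hN, τ.mapsTo hxτ⟩, τ.left_inv x hxτ⟩))
  · obtain ⟨ρ, hρ, y, ⟨hyN, hyρ⟩, hρy⟩ := mem_iUnion₂.1 hsat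
    -- `x` is the image of `y ∈ N` under `τ⁻¹ ∘ ρ ∈ 𝒯`
    obtain ⟨σ, hσ, hσs, hσf⟩ := hcomp ρ hρ τ.symm (hinv τ hτ)
    have hyσ : y ∈ σ.source := hσs ▸ ⟨hyρ, show ρ.toFun y ∈ τ.target from hρy ▸ τ.mapsTo hxτ⟩
    have hσy : σ.toFun y = x := by
      rw [hσf y hyσ]
      exact (congrArg τ.invFun hρy).trans (τ.left_inv x hxτ)
    exact hx (.inr (mem_biUnion hσ ⟨y, ⟨hyN, hyσ⟩, hσy⟩))

end Saturation

/-- **Ghys' lemma (cocycle form).** For a finite measure `ν` quasi-invariant under a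
countable family `𝒯` of partial Borel automorphisms closed under inversion and
composition, there is a measurable saturated set `X₀` of full measure such that at every
`x ∈ X₀`, for any two elements `τ₁, τ₂ ∈ 𝒯` defined at `x` with `τ₁ x = τ₂ x`, the
Radon–Nikodym derivatives `d[(τ₁⁻¹)_*ν]/dν` and `d[(τ₂⁻¹)_*ν]/dν` agree at `x`. -/
theorem ghys_lemma_cocycle
    {α : Type*} [MeasurableSpace α] (ν : Measure α) [IsFiniteMeasure ν]
    (𝒯 : Set (PartialBorelAut α)) (hcount : 𝒯.Countable)
    (hinv : ClosedUnderInv 𝒯) (hcomp : ClosedUnderComp 𝒯)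
    (hqi : QuasiInvariant 𝒯 ν) :
    ∃ X₀ : Set α, MeasurableSet X₀ ∧ ν X₀ᶜ = 0 ∧ Saturated 𝒯 X₀ ∧
      ∀ x ∈ X₀, ∀ τ₁ ∈ 𝒯, ∀ τ₂ ∈ 𝒯, x ∈ τ₁.source → x ∈ τ₂.source →
        τ₁.toFun x = τ₂.toFun x →
        (τ₁.symm.pushforward ν).rnDeriv ν x = (τ₂.symm.pushforward ν).rnDeriv ν x := by
  have hac : ∀ τ ∈ 𝒯, τ.symm.pushforward ν ≪ ν := fun τ hτ =>
    τ.symm_pushforward_absolutelyContinuous fun A hA hAτ => (hqi τ hτ A hA hAτ).1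
  set bad := ⋃ τ₁ ∈ 𝒯, ⋃ τ₂ ∈ 𝒯,
    {x | x ∈ τ₁.source ∧ x ∈ τ₂.source ∧ τ₁.toFun x = τ₂.toFun x ∧
      (τ₁.symm.pushforward ν).rnDeriv ν x ≠ (τ₂.symm.pushforward ν).rnDeriv ν x}
  have hbad : ν bad = 0 :=
    (measure_biUnion_null_iff hcount).2 fun τ₁ hτ₁ => (measure_biUnion_null_iff hcount).2
      fun τ₂ hτ₂ => τ₁.measure_coincidence_rnDeriv_ne_eq_zero ν τ₂ (hac τ₁ hτ₁) (hac τ₂ hτ₂)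
  have hN : MeasurableSet (toMeasurable ν bad) := measurableSet_toMeasurable ν bad
  have hM0 : ν (saturation 𝒯 (toMeasurable ν bad)) = 0 :=
    measure_saturation_eq_zero hcount hqi hN ((measure_toMeasurable bad).trans hbad)
  refine ⟨(saturation 𝒯 (toMeasurable ν bad))ᶜ, (measurableSet_saturation hcount hN).compl,
    by rwa [compl_compl], saturated_compl_saturation hinv hcomp _, ?_⟩
  intro x hx τ₁ hτ₁ τ₂ hτ₂ hx₁ hx₂ heq
  by_contra hne
  exact hx (.inl (subset_toMeasurable ν bad
    (mem_biUnion hτ₁ (mem_biUnion hτ₂ ⟨hx₁, hx₂, heq, hne⟩))))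
end

section
/- Let E be a finite-dimensional real inner product space and let U, V be subspaces with U ∩ V = {0} and U + V = E. For orthonormal bases (u_1,…,u_k) of U and (v_1,…,v_m) of V, and an orthonormal basis e of E, let α = |det_e(u_1,…,u_k,v_1,…,v_m)| be the absolute value of the determinant of the concatenated family with respect to e. Then: (i) α does not depend on the choice of the orthonormal bases of U, of V, or of E; (ii) 0 < α ≤ 1; (iii) α = 1 if and only if U and V are orthogonal (⟪u,v⟫ = 0 for all u ∈ U, v ∈ V). -/
/-!
For fixed `v`, `x ↦ det_e (x ⧺ v)` is an alternating form on `U`, and an alternating form has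
values of equal absolute value on any two orthonormal bases, which differ by an orthogonal
matrix. The same applies to `v`, and `det_e = det_e e' • det_e'` with `|det_e e'| = 1` handles
`e`. The bound `α ≤ 1` is Hadamard's inequality for the unit vectors `u ⧺ v`. In its equality
case every factor of the Gram–Schmidt formula `det_g (u ⧺ v) = ∏ i, ⟪g i, (u ⧺ v) i⟫` has
absolute value `1`, so each `(u ⧺ v) i` is `± g i`; hence `u ⧺ v` is orthonormal, which for
orthonormal `u` and `v` means `U ⟂ V`.
-/

open scoped RealInnerProductSpace

open Module Submodule

namespace Fin

variable {α : Type*} {m n : ℕ}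

theorem castAdd_ne_natAdd (i : Fin m) (j : Fin n) : castAdd n i ≠ natAdd m j := by
  rw [Ne, Fin.ext_iff, val_castAdd, val_natAdd]
  omega

theorem range_append (u : Fin m → α) (v : Fin n → α) :
    Set.range (Fin.append u v) = Set.range u ∪ Set.range v := by
  rw [← Set.Sum.elim_range, ← append_comp_sumElim, Set.range_comp,
    (Set.range_eq_univ (f := Sum.elim (castAdd n) (natAdd m))).2 ?_, Set.image_univ]
  intro i
  induction i using addCases with
  | left a => exact ⟨.inl a, rfl⟩
  | right b => exact ⟨.inr b, rfl⟩

theorem append_update_left [DecidableEq (Fin m)] [DecidableEq (Fin (m + n))]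
    (u : Fin m → α) (v : Fin n → α) (i : Fin m) (x : α) :
    Fin.append (Function.update u i x) v = Function.update (Fin.append u v) (castAdd n i) x := by
  funext j
  induction j using addCases with
  | left a => simp [Function.update_apply, castAdd_inj]
  | right b => simp [(castAdd_ne_natAdd _ _).symm]

theorem append_update_right [DecidableEq (Fin n)] [DecidableEq (Fin (m + n))]
    (u : Fin m → α) (v : Fin n → α) (i : Fin n) (x : α) :
    Fin.append u (Function.update v i x) = Function.update (Fin.append u v) (natAdd m i) x := by
  funext j
  induction j using addCases with
  | left a => simp [castAdd_ne_natAdd]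
  | right b => simp [Function.update_apply, natAdd_inj]

end Fin

namespace AlternatingMap

variable {R M N : Type*} [CommSemiring R] [AddCommMonoid M] [Module R M] [AddCommMonoid N]
  [Module R N] {k m : ℕ}

def fixRight (ω : M [⋀^Fin (k + m)]→ₗ[R] N) (v : Fin m → M) : M [⋀^Fin k]→ₗ[R] N where
  toFun x := ω (Fin.append x v)
  map_update_add' x i a b := by simp only [Fin.append_update_left, ω.map_update_add]
  map_update_smul' x i c a := by simp only [Fin.append_update_left, ω.map_update_smul]
  map_eq_zero_of_eq' x i j hx hij :=
    ω.map_eq_zero_of_eq _ (by simpa using hx) (Fin.castAdd_injective k m |>.ne hij)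

def fixLeft (ω : M [⋀^Fin (k + m)]→ₗ[R] N) (u : Fin k → M) : M [⋀^Fin m]→ₗ[R] N where
  toFun y := ω (Fin.append u y)
  map_update_add' y i a b := by simp only [Fin.append_update_right, ω.map_update_add]
  map_update_smul' y i c a := by simp only [Fin.append_update_right, ω.map_update_smul]
  map_eq_zero_of_eq' y i j hy hij :=
    ω.map_eq_zero_of_eq _ (by simpa using hy) (Fin.natAdd_injective m k |>.ne hij)

end AlternatingMap

theorem Finset.eq_one_of_prod_eq_one_of_le_one {ι R : Type*} [Fintype ι] [CommSemiring R]
    [PartialOrder R] [IsOrderedRing R] {a : ι → R} (h0 : ∀ i, 0 ≤ a i) (h1 : ∀ i, a i ≤ 1)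
    (hprod : ∏ i, a i = 1) (i : ι) : a i = 1 := by
  classical
  refine le_antisymm (h1 i) ?_
  calc 1 = a i * ∏ j ∈ Finset.univ.erase i, a j := by
        rw [Finset.mul_prod_erase _ _ (Finset.mem_univ i), hprod]
    _ ≤ a i * 1 := by
        gcongr
        exacts [h0 i, Finset.prod_le_one (fun j _ => h0 j) fun j _ => h1 j]
    _ = a i := mul_one _

theorem Module.Basis.det_ne_zero_of_span_eq_top {ι K V : Type*} [Fintype ι] [DecidableEq ι]
    [Field K] [AddCommGroup V] [Module K V] (b : Basis ι K V) {f : ι → V}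
    (hf : span K (Set.range f) = ⊤) : b.det f ≠ 0 :=
  (b.is_basis_iff_det.1 ⟨linearIndependent_of_top_le_span_of_card_eq_finrank hf.ge
    (finrank_eq_card_basis b).symm, hf⟩).ne_zero

theorem orthonormal_append_iff {𝕜 F : Type*} [RCLike 𝕜] [NormedAddCommGroup F]
    [InnerProductSpace 𝕜 F] {k m : ℕ} {u : Fin k → F} {v : Fin m → F}
    (hu : Orthonormal 𝕜 u) (hv : Orthonormal 𝕜 v) :
    Orthonormal 𝕜 (Fin.append u v) ↔ span 𝕜 (Set.range u) ⟂ span 𝕜 (Set.range v) := by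
  rw [isOrtho_span]
  constructor
  · rintro h _ ⟨i, rfl⟩ _ ⟨j, rfl⟩
    simpa using h.2 (Fin.castAdd_ne_natAdd i j)
  · intro h
    rw [orthonormal_iff_ite] at hu hv ⊢
    intro i j
    induction i using Fin.addCases <;> induction j using Fin.addCases <;>
      simp [hu, hv, h ⟨_, rfl⟩ ⟨_, rfl⟩, inner_eq_zero_symm.1 (h ⟨_, rfl⟩ ⟨_, rfl⟩),
        Fin.castAdd_ne_natAdd, (Fin.castAdd_ne_natAdd _ _).symm]

section RealInnerProductSpace

variable {E : Type*} [NormedAddCommGroup E] [InnerProductSpace ℝ E] {ι : Type*} [Fintype ι]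

noncomputable def Orthonormal.toOrthonormalBasisOfSpanEq {v : ι → E} (hv : Orthonormal ℝ v)
    {W : Submodule ℝ E} (hW : span ℝ (Set.range v) = W) : OrthonormalBasis ι ℝ W :=
  OrthonormalBasis.mk (hv.codRestrict W fun i => hW ▸ subset_span ⟨i, rfl⟩) <| by
    apply (map_injective_of_injective W.injective_subtype).eq_iff.1 ?_ |>.ge
    rw [map_span, ← Set.range_comp, map_subtype_top]
    exact hW

@[simp]
theorem Orthonormal.coe_toOrthonormalBasisOfSpanEq {v : ι → E} (hv : Orthonormal ℝ v)
    {W : Submodule ℝ E} (hW : span ℝ (Set.range v) = W) (i : ι) :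
    (hv.toOrthonormalBasisOfSpanEq hW i : E) = v i := by
  simp [Orthonormal.toOrthonormalBasisOfSpanEq]

variable [DecidableEq ι]

theorem AlternatingMap.abs_apply_orthonormalBasis_eq (ω : E [⋀^ι]→ₗ[ℝ] ℝ)
    (b b' : OrthonormalBasis ι ℝ E) : |ω b| = |ω b'| := by
  have h : ω b = ω b' * b'.toBasis.det b := by
    simpa using AlternatingMap.congr_fun (ω.eq_smul_basis_det b'.toBasis) b
  rw [h, abs_mul, ← Real.norm_eq_abs (b'.toBasis.det b), b'.det_to_matrix_orthonormalBasis,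
    mul_one]

theorem AlternatingMap.abs_apply_eq_of_orthonormal_of_span_eq (ω : E [⋀^ι]→ₗ[ℝ] ℝ)
    {u u' : ι → E} (hu : Orthonormal ℝ u) (hu' : Orthonormal ℝ u')
    (h : span ℝ (Set.range u) = span ℝ (Set.range u')) : |ω u| = |ω u'| := by
  simpa [Function.comp_def] using
    (ω.compLinearMap (span ℝ (Set.range u')).subtype).abs_apply_orthonormalBasis_eq
      (hu.toOrthonormalBasisOfSpanEq h) (hu'.toOrthonormalBasisOfSpanEq rfl)

theorem OrthonormalBasis.abs_det_eq (e e' : OrthonormalBasis ι ℝ E) (f : ι → E) :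
    |e.toBasis.det f| = |e'.toBasis.det f| := by
  have h : e.toBasis.det f = e.toBasis.det e' * e'.toBasis.det f := by
    simpa using AlternatingMap.congr_fun (e.toBasis.det.eq_smul_basis_det e'.toBasis) f
  rw [h, abs_mul, ← Real.norm_eq_abs (e.toBasis.det e'), e.det_to_matrix_orthonormalBasis,
    one_mul]

namespace OrthonormalBasis

variable {n : ℕ} (e : OrthonormalBasis (Fin n) ℝ E) {f : Fin n → E}

theorem abs_det_le_prod_norm (f : Fin n → E) : |e.toBasis.det f| ≤ ∏ i, ‖f i‖ := by
  have : Fact (finrank ℝ E = n) := ⟨by simpa using finrank_eq_card_basis e.toBasis⟩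
  rw [← e.toBasis.orientation.volumeForm_robust' e]
  exact e.toBasis.orientation.abs_volumeForm_apply_le f

theorem abs_det_le_one (hf : ∀ i, ‖f i‖ = 1) : |e.toBasis.det f| ≤ 1 := by
  simpa [hf] using e.abs_det_le_prod_norm f

theorem orthonormal_of_abs_det_eq_one (hf : ∀ i, ‖f i‖ = 1) (hdet : |e.toBasis.det f| = 1) :
    Orthonormal ℝ f := by
  have := e.toBasis.finiteDimensional_of_finite
  set g := InnerProductSpace.gramSchmidtOrthonormalBasis (finrank_eq_card_basis e.toBasis) f
    with hg
  have hle : ∀ i, |⟪g i, f i⟫| ≤ 1 := fun i =>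
    (abs_real_inner_le_norm _ _).trans (by simp [g.orthonormal.1 i, hf i])
  have hprod : ∏ i, |⟪g i, f i⟫| = 1 := by
    rw [← Finset.abs_prod, hg, ← InnerProductSpace.gramSchmidtOrthonormalBasis_det,
      ← e.abs_det_eq, hdet]
  have hparallel : ∀ i, ∃ r : ℝ, r ≠ 0 ∧ f i = r • g i := fun i =>
    (norm_inner_eq_norm_iff (g.orthonormal.ne_zero i) (by simp [← norm_ne_zero_iff, hf i])).1 <| by
      rw [Real.norm_eq_abs, Finset.eq_one_of_prod_eq_one_of_le_one (fun _ => abs_nonneg _) hle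
        hprod i, g.orthonormal.1 i, hf i, mul_one]
  refine ⟨hf, fun i j hij => ?_⟩
  obtain ⟨r, -, hr⟩ := hparallel i
  obtain ⟨s, -, hs⟩ := hparallel j
  rw [hr, hs, real_inner_smul_left, real_inner_smul_right, g.orthonormal.2 hij, mul_zero,
    mul_zero]

theorem abs_det_eq_one_iff (hf : ∀ i, ‖f i‖ = 1) : |e.toBasis.det f| = 1 ↔ Orthonormal ℝ f := by
  refine ⟨e.orthonormal_of_abs_det_eq_one hf, fun hon => ?_⟩
  have : Fact (finrank ℝ E = n) := ⟨by simpa using finrank_eq_card_basis e.toBasis⟩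
  rw [← e.toBasis.orientation.volumeForm_robust' e,
    e.toBasis.orientation.abs_volumeForm_apply_of_pairwise_orthogonal hon.2]
  simp [hf]

end OrthonormalBasis

end RealInnerProductSpace

theorem angle_function_wellDefined_general
    {E : Type*} [NormedAddCommGroup E] [InnerProductSpace ℝ E]
    (U V : Submodule ℝ E) (hUV : IsCompl U V)
    {k m : ℕ}
    (u u' : Fin k → E) (v v' : Fin m → E)
    (hu : Orthonormal ℝ u) (hu_span : Submodule.span ℝ (Set.range u) = U)
    (hu' : Orthonormal ℝ u') (hu'_span : Submodule.span ℝ (Set.range u') = U)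
    (hv : Orthonormal ℝ v) (hv_span : Submodule.span ℝ (Set.range v) = V)
    (hv' : Orthonormal ℝ v') (hv'_span : Submodule.span ℝ (Set.range v') = V)
    (e e' : OrthonormalBasis (Fin (k + m)) ℝ E) :
    |e.toBasis.det (Fin.append u v)| = |e'.toBasis.det (Fin.append u' v')| ∧
    0 < |e.toBasis.det (Fin.append u v)| ∧
    |e.toBasis.det (Fin.append u v)| ≤ 1 ∧
    (|e.toBasis.det (Fin.append u v)| = 1 ↔ ∀ x ∈ U, ∀ y ∈ V, ⟪x, y⟫ = 0) := by
  have hunit : ∀ i, ‖Fin.append u v i‖ = 1 := fun i => by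
    induction i using Fin.addCases <;> simp [hu.1, hv.1]
  have hspan : span ℝ (Set.range (Fin.append u v)) = ⊤ := by
    rw [Fin.range_append, span_union, hu_span, hv_span, hUV.sup_eq_top]
  refine ⟨?_, abs_pos.2 (e.toBasis.det_ne_zero_of_span_eq_top hspan), e.abs_det_le_one hunit, ?_⟩
  · calc |e.toBasis.det (Fin.append u v)| = |e'.toBasis.det (Fin.append u v)| :=
          e.abs_det_eq e' _
      _ = |e'.toBasis.det (Fin.append u' v)| :=
          (e'.toBasis.det.fixRight v).abs_apply_eq_of_orthonormal_of_span_eq hu hu'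
            (hu_span.trans hu'_span.symm)
      _ = |e'.toBasis.det (Fin.append u' v')| :=
          (e'.toBasis.det.fixLeft u').abs_apply_eq_of_orthonormal_of_span_eq hv hv'
            (hv_span.trans hv'_span.symm)
  · rw [e.abs_det_eq_one_iff hunit, orthonormal_append_iff hu hv, hu_span, hv_span,
      isOrtho_iff_inner_eq]

/-- **Well-definedness and basic properties of the angle function.**
Let `E` be a finite-dimensional real inner product space and `U, V` complementary
subspaces. For orthonormal families `u` (spanning `U`), `v` (spanning `V`) and an
orthonormal basis `e` of `E`, set `α = |det_e (u ⧺ v)|`. Then `α` is independent of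
all these choices, `0 < α ≤ 1`, and `α = 1` iff `U ⊥ V`. -/
theorem angle_function_wellDefined
    {E : Type*} [NormedAddCommGroup E] [InnerProductSpace ℝ E] [FiniteDimensional ℝ E]
    (U V : Submodule ℝ E) (hUV : IsCompl U V)
    {k m : ℕ}
    (u u' : Fin k → E) (v v' : Fin m → E)
    (hu : Orthonormal ℝ u) (hu_span : Submodule.span ℝ (Set.range u) = U)
    (hu' : Orthonormal ℝ u') (hu'_span : Submodule.span ℝ (Set.range u') = U)
    (hv : Orthonormal ℝ v) (hv_span : Submodule.span ℝ (Set.range v) = V)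
    (hv' : Orthonormal ℝ v') (hv'_span : Submodule.span ℝ (Set.range v') = V)
    (e e' : OrthonormalBasis (Fin (k + m)) ℝ E) :
    |e.toBasis.det (Fin.append u v)| = |e'.toBasis.det (Fin.append u' v')| ∧
    0 < |e.toBasis.det (Fin.append u v)| ∧
    |e.toBasis.det (Fin.append u v)| ≤ 1 ∧
    (|e.toBasis.det (Fin.append u v)| = 1 ↔ ∀ x ∈ U, ∀ y ∈ V, ⟪x, y⟫ = 0) :=
  angle_function_wellDefined_general U V hUV u u' v v' hu hu_span hu' hu'_span hv hv_span hv'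
    hv'_span e e'
end

section
/- Let E and E' be finite-dimensional real inner product spaces of the same dimension, A : E → E' a linear isomorphism, U, V complementary subspaces of E (U ∩ V = {0}, U + V = E), and U' = A(U), V' = A(V) (which are complementary in E'). Denote by |det A| the absolute value of the determinant of the matrix of A with respect to orthonormal bases of E and E', by |det(A|_U)| the absolute value of the determinant of the matrix of the restriction A|_U : U → U' with respect to orthonormal bases of U and U', and similarly |det(A|_V)| for A|_V : V → V'. Then |det A| · α(U,V) = α(U',V') · |det(A|_U)| · |det(A|_V)|, where α denotes the angle function. -/
/-! Apply `A` to the concatenated frame `w = (u, v)` of orthonormal bases of `U` and `V`.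
In the ambient bases, `det (A ∘ w) = det A · det w`. On the other hand `A u = u' · [A|_U]` and
`A v = v' · [A|_V]`, so `A ∘ w` is the frame `w' = (u', v')` multiplied by the block diagonal matrix
`diag([A|_U], [A|_V])`, whence `det (A ∘ w) = det w' · det [A|_U] · det [A|_V]`. -/

open Matrix

theorem Fin.comp_append {α β : Type*} {k m : ℕ} (f : α → β) (x : Fin k → α) (y : Fin m → α) :
    f ∘ Fin.append x y = Fin.append (f ∘ x) (f ∘ y) := by
  funext j
  refine Fin.addCases (fun j => ?_) (fun j => ?_) j <;> simp

section

variable {R M N : Type*} [CommRing R] [AddCommGroup M] [Module R M] [AddCommGroup N] [Module R N]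

namespace Module.Basis

theorem det_comp_linearMap {ι : Type*} [Fintype ι] [DecidableEq ι] (b : Basis ι R M)
    (c : Basis ι R N) (f : M →ₗ[R] N) (v : ι → M) :
    c.det (f ∘ v) = (LinearMap.toMatrix b c f).det * b.det v := by
  have hfb : c.det (f ∘ b) = (LinearMap.toMatrix b c f).det := by
    rw [det_apply]
    congr 1
    ext i j
    rw [toMatrix_apply, LinearMap.toMatrix_apply, Function.comp_apply]
  rw [← hfb]
  exact congr($((c.det.compLinearMap f).eq_smul_basis_det b) v)

theorem det_sum_smul {ι : Type*} [Fintype ι] [DecidableEq ι] (e : Basis ι R N)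
    (B : Matrix ι ι R) (z : ι → N) :
    e.det (fun j => ∑ i, B i j • z i) = B.det * e.det z := by
  have hB : e.toMatrix (fun j => ∑ i, B i j • z i) = e.toMatrix z * B := by
    ext a b
    simp [toMatrix_apply, mul_apply, Finsupp.finsetSum_apply, mul_comm]
  rw [det_apply, det_apply, hB, det_mul, mul_comm]

theorem det_append_sum_smul {k m : ℕ} (e : Basis (Fin (k + m)) R N) (x : Fin k → N)
    (y : Fin m → N) (P : Matrix (Fin k) (Fin k) R) (Q : Matrix (Fin m) (Fin m) R) :
    e.det (Fin.append (fun j => ∑ i, P i j • x i) (fun j => ∑ i, Q i j • y i)) =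
      P.det * Q.det * e.det (Fin.append x y) := by
  set B := (fromBlocks P 0 0 Q).submatrix finSumFinEquiv.symm finSumFinEquiv.symm
  have hB : Fin.append (fun j => ∑ i, P i j • x i) (fun j => ∑ i, Q i j • y i) =
      fun j => ∑ i, B i j • Fin.append x y i := by
    funext j
    refine Fin.addCases (fun j => ?_) (fun j => ?_) j <;> simp [B, Fin.sum_univ_add]
  rw [hB, det_sum_smul, det_submatrix_equiv_self, det_fromBlocks_zero₂₁]

end Module.Basis

namespace LinearMap

variable {ι κ : Type*} [Fintype ι] [Fintype κ] [DecidableEq ι]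

theorem apply_basis_eq_sum_toMatrix (b : Module.Basis ι R M) (c : Module.Basis κ R N)
    (f : M →ₗ[R] N) (i : ι) :
    f (b i) = ∑ j, toMatrix b c f j i • c j := by
  simpa using Matrix.toLin_self b c (toMatrix b c f) i

theorem apply_basis_eq_sum_toMatrix_restrict (f : M →ₗ[R] N) {p : Submodule R M}
    {q : Submodule R N} (h : ∀ x ∈ p, f x ∈ q) (b : Module.Basis ι R p)
    (c : Module.Basis κ R q) (i : ι) :
    f (b i) = ∑ j, toMatrix b c (f.restrict h) j i • (c j : N) := by
  simpa using congrArg Subtype.val ((f.restrict h).apply_basis_eq_sum_toMatrix b c i)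

end LinearMap

end

theorem abs_det_mul_angle_eq_general
    {E E' : Type*} [NormedAddCommGroup E] [InnerProductSpace ℝ E]
    [NormedAddCommGroup E'] [InnerProductSpace ℝ E']
    (A : E ≃ₗ[ℝ] E') (U V : Submodule ℝ E)
    {k m : ℕ}
    (bE : OrthonormalBasis (Fin (k + m)) ℝ E)
    (bE' : OrthonormalBasis (Fin (k + m)) ℝ E')
    (bU : OrthonormalBasis (Fin k) ℝ U) (bV : OrthonormalBasis (Fin m) ℝ V)
    (bU' : OrthonormalBasis (Fin k) ℝ (U.map (A : E →ₗ[ℝ] E')))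
    (bV' : OrthonormalBasis (Fin m) ℝ (V.map (A : E →ₗ[ℝ] E'))) :
    |(LinearMap.toMatrix bE.toBasis bE'.toBasis (A : E →ₗ[ℝ] E')).det| *
      |bE.toBasis.det (Fin.append (fun i => (bU i : E)) (fun j => (bV j : E)))| =
    |bE'.toBasis.det (Fin.append (fun i => (bU' i : E')) (fun j => (bV' j : E')))| *
      |(LinearMap.toMatrix bU.toBasis bU'.toBasis
          ((A : E →ₗ[ℝ] E').restrict
            (fun x hx => Submodule.mem_map_of_mem (f := (A : E →ₗ[ℝ] E')) hx))).det| *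
      |(LinearMap.toMatrix bV.toBasis bV'.toBasis
          ((A : E →ₗ[ℝ] E').restrict
            (fun x hx => Submodule.mem_map_of_mem (f := (A : E →ₗ[ℝ] E')) hx))).det| := by
  have hU := (A : E →ₗ[ℝ] E').apply_basis_eq_sum_toMatrix_restrict
    (fun _ hx => Submodule.mem_map_of_mem hx) bU.toBasis bU'.toBasis
  have hV := (A : E →ₗ[ℝ] E').apply_basis_eq_sum_toMatrix_restrict
    (fun _ hx => Submodule.mem_map_of_mem hx) bV.toBasis bV'.toBasis
  simp only [OrthonormalBasis.coe_toBasis] at hU hV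
  rw [← abs_mul, ← abs_mul, ← abs_mul, ← bE.toBasis.det_comp_linearMap, Fin.comp_append]
  simp only [Function.comp_def, hU, hV]
  rw [Module.Basis.det_append_sum_smul, mul_comm, mul_assoc]

/-- **Multiplicativity of the Jacobian along a splitting.**
Let `A : E ≃ E'` be a linear isomorphism between finite-dimensional real inner product
spaces, `U, V` complementary subspaces of `E`, and `U' = A(U)`, `V' = A(V)`. With all
determinants computed in orthonormal bases, one has
`|det A| · α(U,V) = α(U',V') · |det (A|_U)| · |det (A|_V)|`, where the angle function
`α(U,V)` is the absolute determinant, in an orthonormal basis of the ambient space, of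
the concatenation of orthonormal bases of `U` and of `V`. -/
theorem abs_det_mul_angle_eq
    {E E' : Type*} [NormedAddCommGroup E] [InnerProductSpace ℝ E] [FiniteDimensional ℝ E]
    [NormedAddCommGroup E'] [InnerProductSpace ℝ E'] [FiniteDimensional ℝ E']
    (A : E ≃ₗ[ℝ] E') (U V : Submodule ℝ E) (hUV : IsCompl U V)
    {k m : ℕ}
    (bE : OrthonormalBasis (Fin (k + m)) ℝ E)
    (bE' : OrthonormalBasis (Fin (k + m)) ℝ E')
    (bU : OrthonormalBasis (Fin k) ℝ U) (bV : OrthonormalBasis (Fin m) ℝ V)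
    (bU' : OrthonormalBasis (Fin k) ℝ (U.map (A : E →ₗ[ℝ] E')))
    (bV' : OrthonormalBasis (Fin m) ℝ (V.map (A : E →ₗ[ℝ] E'))) :
    |(LinearMap.toMatrix bE.toBasis bE'.toBasis (A : E →ₗ[ℝ] E')).det| *
      |bE.toBasis.det (Fin.append (fun i => (bU i : E)) (fun j => (bV j : E)))| =
    |bE'.toBasis.det (Fin.append (fun i => (bU' i : E')) (fun j => (bV' j : E')))| *
      |(LinearMap.toMatrix bU.toBasis bU'.toBasis
          ((A : E →ₗ[ℝ] E').restrict
            (fun x hx => Submodule.mem_map_of_mem (f := (A : E →ₗ[ℝ] E')) hx))).det| *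
      |(LinearMap.toMatrix bV.toBasis bV'.toBasis
          ((A : E →ₗ[ℝ] E').restrict
            (fun x hx => Submodule.mem_map_of_mem (f := (A : E →ₗ[ℝ] E')) hx))).det| :=
  abs_det_mul_angle_eq_general A U V bE bE' bU bV bU' bV'
end

section
/- Let (α, 𝒜) be a measurable space, 𝒯 a countable family of partial Borel automorphisms of α, and ν₁, ν₂ finite measures on α, each quasi-invariant under 𝒯. If ν₁ and ν₂ are mutually singular, then there exists a measurable set 𝒳 ⊆ α, saturated under 𝒯, with ν₁(α \ 𝒳) = 0 and ν₂(𝒳) = 0. -/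
open MeasureTheory Set

/-- Two mutually singular finite measures, each quasi-invariant under a countable family
of partial Borel automorphisms, are separated by a measurable saturated set that is full
for the first and null for the second. -/
theorem mutuallySingular_separated_by_saturated_set
    {α : Type*} [MeasurableSpace α]
    (ν₁ ν₂ : Measure α) [IsFiniteMeasure ν₁] [IsFiniteMeasure ν₂]
    (𝒯 : Set (PartialBorelAut α)) (hcount : 𝒯.Countable)
    (hqi₁ : QuasiInvariant 𝒯 ν₁) (hqi₂ : QuasiInvariant 𝒯 ν₂)
    (hsing : ν₁ ⟂ₘ ν₂) :
    ∃ 𝒳 : Set α, MeasurableSet 𝒳 ∧ Saturated 𝒯 𝒳 ∧ ν₁ 𝒳ᶜ = 0 ∧ ν₂ 𝒳 = 0 := by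
  obtain ⟨s, hsm, hs1, hs2⟩ := hsing
  -- base separating set: full for ν₁, null for ν₂
  set S : Set α := sᶜ with hS
  have hSm : MeasurableSet S := hsm.compl
  have hSnull : ν₂ S = 0 := hs2
  -- one-step saturation operator
  set sat : Set α → Set α := fun Y =>
    Y ∪ ⋃ τ ∈ 𝒯, (τ.toFun '' (Y ∩ τ.source) ∪ τ.invFun '' (Y ∩ τ.target)) with hsat
  have hsub : ∀ Y, Y ⊆ sat Y := fun Y => subset_union_left
  have hsatm : ∀ Y, MeasurableSet Y → MeasurableSet (sat Y) := by
    intro Y hY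
    refine hY.union (MeasurableSet.biUnion hcount fun τ _ => MeasurableSet.union ?_ ?_)
    · exact τ.measurable_image _ (hY.inter τ.source_measurable) inter_subset_right
    · exact τ.measurable_image_inv _ (hY.inter τ.target_measurable) inter_subset_right
  have hsatnull : ∀ Y, MeasurableSet Y → ν₂ Y = 0 → ν₂ (sat Y) = 0 := by
    intro Y hY h0
    refine measure_union_null h0 ?_
    refine (measure_biUnion_null_iff hcount).2 fun τ hτ => measure_union_null ?_ ?_
    · exact ((hqi₂ τ hτ _ (hY.inter τ.source_measurable) inter_subset_right).1
        (measure_mono_null inter_subset_left h0))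
    · have hBm : MeasurableSet (τ.invFun '' (Y ∩ τ.target)) :=
        τ.measurable_image_inv _ (hY.inter τ.target_measurable) inter_subset_right
      have hBs : τ.invFun '' (Y ∩ τ.target) ⊆ τ.source :=
        fun x ⟨y, hy, hxy⟩ => hxy ▸ τ.inv_mapsTo hy.2
      have himg : τ.toFun '' (τ.invFun '' (Y ∩ τ.target)) = Y ∩ τ.target := by
        rw [← image_comp]
        have : EqOn (τ.toFun ∘ τ.invFun) id (Y ∩ τ.target) :=
          fun y hy => τ.right_inv y hy.2
        rw [image_congr this, image_id]
      refine (hqi₂ τ hτ _ hBm hBs).2 ?_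
      rw [himg]
      exact measure_mono_null inter_subset_left h0
  -- iterate
  set F : ℕ → Set α := fun n => sat^[n] S with hF
  have hFsucc : ∀ n, F (n + 1) = sat (F n) := fun n => Function.iterate_succ_apply' sat n S
  have hFm : ∀ n, MeasurableSet (F n) := by
    intro n; induction n with
    | zero => exact hSm
    | succ n ih => rw [hFsucc]; exact hsatm _ ih
  have hFnull : ∀ n, ν₂ (F n) = 0 := by
    intro n; induction n with
    | zero => exact hSnull
    | succ n ih => rw [hFsucc]; exact hsatnull _ (hFm n) ih
  refine ⟨⋃ n, F n, MeasurableSet.iUnion hFm, ?_, ?_, ?_⟩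
  · intro τ hτ
    constructor
    · rintro x ⟨y, ⟨hyU, hys⟩, rfl⟩
      obtain ⟨n, hn⟩ := mem_iUnion.1 hyU
      refine mem_iUnion.2 ⟨n + 1, ?_⟩
      rw [hFsucc]
      exact Or.inr (mem_biUnion hτ (Or.inl ⟨y, ⟨hn, hys⟩, rfl⟩))
    · rintro x ⟨y, ⟨hyU, hyt⟩, rfl⟩
      obtain ⟨n, hn⟩ := mem_iUnion.1 hyU
      refine mem_iUnion.2 ⟨n + 1, ?_⟩
      rw [hFsucc]
      exact Or.inr (mem_biUnion hτ (Or.inr ⟨y, ⟨hn, hyt⟩, rfl⟩))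
  · have : (⋃ n, F n)ᶜ ⊆ s := by
      rw [compl_subset_comm]
      exact subset_iUnion F 0
    exact measure_mono_null this hs1
  · exact measure_iUnion_null hFnull
end
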